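/- arXiv:2307.04490 — 2 statements merged into one kernel-verified Lean document; each statement's English description precedes it below -/
import Mathlib

section
/- Fix N ≥ 2 and Δγ > 0, and let D be the (N+1)×(N+1) SBP21 difference operator with entries D₀₀ = −1/Δγ, D₀₁ = 1/Δγ; D_{k,k−1} = −1/(2Δγ), D_{k,k+1} = 1/(2Δγ) for 1 ≤ k ≤ N−1; D_{N,N−1} = −1/Δγ, D_{N,N} = 1/Δγ; all other entries zero. Define w ∈ ℝ^{N+1} by w₀ = 1, w_k = 2(−1)^k for 1 ≤ k ≤ N−1, and w_N = (−1)^N. Then w ≠ 0 and Dᵀ w = 0; i.e. the transpose of the SBP21 operator possesses a nontrivial highly oscillating null mode (the 'π-mode'), so D itself is not null-space consistent without regularization. -/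
/-!
Weighted by `w`, every column of `D` has exactly two nonzero entries, `±(-1)^m / Δγ` with
opposite signs. In the interior this is the alternating sign of the centred stencil; at the
boundaries the one-sided entries `±1/Δγ` are twice the centred ones, which is compensated by
the halved weights `w₀ = 1` and `w_N = (-1)^N`.
-/

open Matrix Finset

namespace SBP21

variable (N : ℕ) (Δγ : ℝ)

noncomputable section

def entry (i j : ℕ) : ℝ :=
  if i = 0 then
    (if j = 0 then -1 / Δγ else if j = 1 then 1 / Δγ else 0)
  else if i = N then
    (if j = N - 1 then -1 / Δγ else if j = N then 1 / Δγ else 0)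
  else
    (if j = i - 1 then -1 / (2 * Δγ)
     else if j = i + 1 then 1 / (2 * Δγ) else 0)

def piMode (i : ℕ) : ℝ :=
  if i = 0 then 1
  else if i = N then (-1 : ℝ) ^ N
  else 2 * (-1 : ℝ) ^ i

end

variable {N}

lemma entry_eq_zero {i j : ℕ} (hsucc : j ≠ i + 1) (hpred : i ≠ j + 1)
    (hdiag : i = j → i ≠ 0 ∧ i ≠ N) : entry N Δγ i j = 0 := by
  unfold entry
  split_ifs <;> first | rfl | omega

lemma piMode_mul_entry_zero_zero : piMode N 0 * entry N Δγ 0 0 = -1 / Δγ := by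
  simp [piMode, entry]

lemma piMode_mul_entry_self (hN : N ≠ 0) :
    piMode N N * entry N Δγ N N = (-1) ^ N / Δγ := by
  simp [piMode, entry, hN, show N ≠ N - 1 by omega, div_eq_mul_inv]

lemma piMode_mul_entry_succ {i : ℕ} (hi : i < N) :
    piMode N i * entry N Δγ i (i + 1) = (-1) ^ i / Δγ := by
  unfold piMode entry
  rcases Nat.eq_zero_or_pos i with rfl | hi0
  · simp
  · simp only [hi0.ne', hi.ne, if_false, if_true, show i + 1 ≠ i - 1 by omega]
    field_simp

lemma piMode_mul_entry_succ_self (j : ℕ) :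
    piMode N (j + 1) * entry N Δγ (j + 1) j = (-1) ^ j / Δγ := by
  unfold piMode entry
  by_cases hj : j + 1 = N
  · subst hj
    simp only [add_eq_zero, one_ne_zero, and_false, if_true, if_false, add_tsub_cancel_right]
    rw [pow_succ]
    ring
  · simp only [add_eq_zero, one_ne_zero, and_false, hj, if_false, if_true,
      add_tsub_cancel_right]
    field_simp
    ring

lemma sum_piMode_mul_entry_eq_add {j a b : ℕ} (ha : a ≤ N) (hb : b ≤ N) (hab : a ≠ b)
    (hsupp : ∀ i ≤ N, i ≠ a → i ≠ b → entry N Δγ i j = 0) :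
    ∑ i ∈ range (N + 1), piMode N i * entry N Δγ i j =
      piMode N a * entry N Δγ a j + piMode N b * entry N Δγ b j :=
  sum_eq_add_of_mem a b (by simpa [Nat.lt_succ_iff]) (by simpa [Nat.lt_succ_iff]) hab
    fun i hi ⟨hia, hib⟩ => by
      rw [hsupp i (Nat.lt_succ_iff.mp (mem_range.mp hi)) hia hib, mul_zero]

lemma sum_piMode_mul_entry (hN : 1 ≤ N) {j : ℕ} (hj : j ≤ N) :
    ∑ i ∈ range (N + 1), piMode N i * entry N Δγ i j = 0 := by
  rcases Nat.eq_zero_or_pos j with rfl | hj0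
  · rw [sum_piMode_mul_entry_eq_add Δγ (a := 0) (b := 1) (by omega) hN (by omega)
      fun i _ h0 h1 => entry_eq_zero Δγ (by omega) (by omega) (by omega),
      piMode_mul_entry_zero_zero, piMode_mul_entry_succ_self]
    ring
  obtain ⟨m, rfl⟩ := Nat.exists_eq_add_of_lt hj0
  rw [zero_add] at hj ⊢
  rcases hj.eq_or_lt with rfl | hjN
  · rw [sum_piMode_mul_entry_eq_add Δγ (a := m) (b := m + 1) (by omega) le_rfl (by omega)
      fun i _ h0 h1 => entry_eq_zero Δγ (by omega) (by omega) (by omega),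
      piMode_mul_entry_succ Δγ (by omega), piMode_mul_entry_self Δγ (by omega), pow_succ]
    ring
  · rw [sum_piMode_mul_entry_eq_add Δγ (a := m) (b := m + 2) (by omega) (by omega) (by omega)
      fun i _ h0 h1 => entry_eq_zero Δγ (by omega) (by omega) (by omega),
      piMode_mul_entry_succ Δγ (by omega), piMode_mul_entry_succ_self, pow_succ]
    ring

end SBP21

theorem stmt17_general (N : ℕ) (hN : 2 ≤ N) (Δγ : ℝ)
    (D : Matrix (Fin (N + 1)) (Fin (N + 1)) ℝ)
    (hD : D = Matrix.of fun i j =>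
      if i.val = 0 then
        (if j.val = 0 then -1 / Δγ else if j.val = 1 then 1 / Δγ else 0)
      else if i.val = N then
        (if j.val = N - 1 then -1 / Δγ else if j.val = N then 1 / Δγ else 0)
      else
        (if j.val = i.val - 1 then -1 / (2 * Δγ)
         else if j.val = i.val + 1 then 1 / (2 * Δγ) else 0))
    (w : Fin (N + 1) → ℝ)
    (hw : w = fun i =>
      if i.val = 0 then 1
      else if i.val = N then (-1 : ℝ) ^ N
      else 2 * (-1 : ℝ) ^ i.val) :
    w ≠ 0 ∧ Dᵀ.mulVec w = 0 := by
  replace hD : D = Matrix.of fun (i j : Fin (N + 1)) => SBP21.entry N Δγ i j := hD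
  replace hw : w = fun i : Fin (N + 1) => SBP21.piMode N i := hw
  subst hD hw
  refine ⟨fun h => by simpa [SBP21.piMode] using congrFun h 0, funext fun j => ?_⟩
  rw [mulVec_transpose, Pi.zero_apply, vecMul, dotProduct]
  simpa [Fin.sum_univ_eq_sum_range (fun i => SBP21.piMode N i * SBP21.entry N Δγ i j)] using
    SBP21.sum_piMode_mul_entry Δγ (by omega) (Nat.lt_succ_iff.mp j.isLt)

/-- The transpose of the SBP21 operator `D` possesses a nontrivial highly oscillating
null mode (the `π`-mode) `w` with `w₀ = 1`, `w_k = 2(−1)^k` for `1 ≤ k ≤ N−1` and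
`w_N = (−1)^N`: `w ≠ 0` and `Dᵀ w = 0`. -/
theorem stmt17 (N : ℕ) (hN : 2 ≤ N) (Δγ : ℝ) (hΔ : 0 < Δγ)
    (D : Matrix (Fin (N + 1)) (Fin (N + 1)) ℝ)
    (hD : D = Matrix.of fun i j =>
      if i.val = 0 then
        (if j.val = 0 then -1 / Δγ else if j.val = 1 then 1 / Δγ else 0)
      else if i.val = N then
        (if j.val = N - 1 then -1 / Δγ else if j.val = N then 1 / Δγ else 0)
      else
        (if j.val = i.val - 1 then -1 / (2 * Δγ)
         else if j.val = i.val + 1 then 1 / (2 * Δγ) else 0))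
    (w : Fin (N + 1) → ℝ)
    (hw : w = fun i =>
      if i.val = 0 then 1
      else if i.val = N then (-1 : ℝ) ^ N
      else 2 * (-1 : ℝ) ^ i.val) :
    w ≠ 0 ∧ Dᵀ.mulVec w = 0 :=
  stmt17_general N hN Δγ D hD w hw
end

section
/- Define the doubled (initial-value) Lagrangian density of eight real variables E_IVP(t₊, ṫ₊, x₊, ẋ₊, t₋, ṫ₋, x₋, ẋ₋) = E_BVP(t₊ + t₋/2, ṫ₊ + ṫ₋/2, x₊ + x₋/2, ẋ₊ + ẋ₋/2) − E_BVP(t₊ − t₋/2, ṫ₊ − ṫ₋/2, x₊ − x₋/2, ẋ₊ − ẋ₋/2), where E_BVP(t, ṫ, x, ẋ) = ½( g₀₀(x) ṫ² − ẋ² ). Then the partial derivatives of E_IVP with respect to the difference variables, evaluated in the physical limit t₋ = ṫ₋ = x₋ = ẋ₋ = 0, equal the corresponding partial derivatives of E_BVP at the plus variables: ∂E_IVP/∂t₋ = ∂E_BVP/∂t = 0, ∂E_IVP/∂ṫ₋ = ∂E_BVP/∂ṫ = g₀₀(x₊) ṫ₊, ∂E_IVP/∂x₋ = ∂E_BVP/∂x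 = ½ g₀₀′(x₊) ṫ₊², and ∂E_IVP/∂ẋ₋ = ∂E_BVP/∂ẋ = −ẋ₊. Consequently, the Euler–Lagrange equations obtained by varying the difference variables t₋, x₋, evaluated in the physical limit, are exactly the geodesic equations d/dγ( g₀₀(x₊) ṫ₊ ) = 0 and ẍ₊ + ½ g₀₀′(x₊) ṫ₊² = 0 for the physical curves (t₊, x₊). -/
/-!
Differentiating `E(p + h/2) - E(p - h/2)` at `h = 0` gives `½ E'(p) + ½ E'(p) = E'(p)`, so each
partial derivative of the doubled Lagrangian in a difference variable, in the physical limit, is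
the partial derivative of `E_BVP` in the corresponding variable; substituting these into the
Euler–Lagrange equations of the difference variables gives the geodesic equations.
-/

theorem HasDerivAt.centralDifference {F : Type*} [NormedAddCommGroup F] [NormedSpace ℝ F]
    {f : ℝ → F} {f' : F} {a : ℝ} (hf : HasDerivAt f f' a) :
    HasDerivAt (fun h : ℝ => f (a + h / 2) - f (a - h / 2)) f' 0 := by
  have hplus : HasDerivAt (fun h : ℝ => a + h / 2) (1 / 2) 0 :=
    ((hasDerivAt_id 0).div_const 2).const_add a
  have hminus : HasDerivAt (fun h : ℝ => a - h / 2) (-(1 / 2)) 0 :=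
    ((hasDerivAt_id 0).div_const 2).const_sub a
  exact ((HasDerivAt.scomp_of_eq 0 hf hplus (by simp)).sub
    (HasDerivAt.scomp_of_eq 0 hf hminus (by simp))).congr_deriv (by module)

noncomputable def geodesicLagrangian (g : ℝ → ℝ) (_t td x xd : ℝ) : ℝ :=
  (1 / 2) * (g x * td ^ 2 - xd ^ 2)

section geodesicLagrangian

variable (g : ℝ → ℝ) (t td x xd : ℝ)

theorem hasDerivAt_geodesicLagrangian_t :
    HasDerivAt (fun t => geodesicLagrangian g t td x xd) 0 t :=
  hasDerivAt_const t _

theorem hasDerivAt_geodesicLagrangian_td :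
    HasDerivAt (fun td => geodesicLagrangian g t td x xd) (g x * td) td :=
  ((((hasDerivAt_pow 2 td).const_mul (g x)).sub_const (xd ^ 2)).const_mul (1 / 2)).congr_deriv
    (by push_cast; ring)

theorem hasDerivAt_geodesicLagrangian_x {g' : ℝ} (hg : HasDerivAt g g' x) :
    HasDerivAt (fun x => geodesicLagrangian g t td x xd) ((1 / 2) * g' * td ^ 2) x :=
  (((hg.mul_const (td ^ 2)).sub_const (xd ^ 2)).const_mul (1 / 2)).congr_deriv (by ring)

theorem hasDerivAt_geodesicLagrangian_xd :
    HasDerivAt (fun xd => geodesicLagrangian g t td x xd) (-xd) xd :=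
  (((hasDerivAt_pow 2 xd).const_sub (g x * td ^ 2)).const_mul (1 / 2)).congr_deriv
    (by push_cast; ring)

end geodesicLagrangian

theorem stmt18_general (m c : ℝ)
    (V : ℝ → ℝ) (hV : ContDiff ℝ 1 V)
    (g : ℝ → ℝ) (hg : g = fun y => c ^ 2 + 2 * V y / m)
    (EBVP : ℝ → ℝ → ℝ → ℝ → ℝ)
    (hEBVP : EBVP = fun t td x xd => (1 / 2) * (g x * td ^ 2 - xd ^ 2))
    (EIVP : ℝ → ℝ → ℝ → ℝ → ℝ → ℝ → ℝ → ℝ → ℝ)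
    (hEIVP : EIVP = fun tp tdp xp xdp tm tdm xm xdm =>
      EBVP (tp + tm / 2) (tdp + tdm / 2) (xp + xm / 2) (xdp + xdm / 2)
        - EBVP (tp - tm / 2) (tdp - tdm / 2) (xp - xm / 2) (xdp - xdm / 2)) :
    (∀ tp tdp xp xdp : ℝ,
      deriv (fun tm => EIVP tp tdp xp xdp tm 0 0 0) 0 = 0 ∧
      deriv (fun tdm => EIVP tp tdp xp xdp 0 tdm 0 0) 0 = g xp * tdp ∧
      deriv (fun xm => EIVP tp tdp xp xdp 0 0 xm 0) 0 = (1 / 2) * deriv g xp * tdp ^ 2 ∧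
      deriv (fun xdm => EIVP tp tdp xp xdp 0 0 0 xdm) 0 = -xdp) ∧
    (∀ tp xp : ℝ → ℝ, ContDiff ℝ 2 tp → ContDiff ℝ 2 xp → ∀ γ : ℝ,
      ((deriv (fun tm => EIVP (tp γ) (deriv tp γ) (xp γ) (deriv xp γ) tm 0 0 0) 0
          - deriv (fun s =>
              deriv (fun tdm => EIVP (tp s) (deriv tp s) (xp s) (deriv xp s) 0 tdm 0 0) 0) γ
            = 0)
        ↔ deriv (fun s => g (xp s) * deriv tp s) γ = 0) ∧
      ((deriv (fun xm => EIVP (tp γ) (deriv tp γ) (xp γ) (deriv xp γ) 0 0 xm 0) 0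
          - deriv (fun s =>
              deriv (fun xdm => EIVP (tp s) (deriv tp s) (xp s) (deriv xp s) 0 0 0 xdm) 0) γ
            = 0)
        ↔ deriv (deriv xp) γ + (1 / 2) * deriv g (xp γ) * (deriv tp γ) ^ 2 = 0)) := by
  have hgd : Differentiable ℝ g := by
    subst hg
    have := hV.differentiable one_ne_zero
    fun_prop
  have hE : EBVP = geodesicLagrangian g := hEBVP
  have partials : ∀ tp tdp xp xdp : ℝ,
      deriv (fun tm => EIVP tp tdp xp xdp tm 0 0 0) 0 = 0 ∧
      deriv (fun tdm => EIVP tp tdp xp xdp 0 tdm 0 0) 0 = g xp * tdp ∧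
      deriv (fun xm => EIVP tp tdp xp xdp 0 0 xm 0) 0 = (1 / 2) * deriv g xp * tdp ^ 2 ∧
      deriv (fun xdm => EIVP tp tdp xp xdp 0 0 0 xdm) 0 = -xdp := by
    intro tp tdp xp xdp
    subst hEIVP hE
    simp only [zero_div, add_zero, sub_zero]
    exact ⟨(hasDerivAt_geodesicLagrangian_t g tp tdp xp xdp).centralDifference.deriv,
      (hasDerivAt_geodesicLagrangian_td g tp tdp xp xdp).centralDifference.deriv,
      (hasDerivAt_geodesicLagrangian_x g tp tdp xp xdp (hgd xp).hasDerivAt).centralDifference.deriv,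
      (hasDerivAt_geodesicLagrangian_xd g tp tdp xp xdp).centralDifference.deriv⟩
  refine ⟨partials, fun tp xp _ _ γ => ?_⟩
  simp only [partials, deriv.fun_neg, zero_sub, neg_eq_zero, sub_neg_eq_add, add_comm,
    and_self]

/-- For the doubled (initial-value) Lagrangian density
`E_IVP(t₊,ṫ₊,x₊,ẋ₊,t₋,ṫ₋,x₋,ẋ₋) = E_BVP(plus + minus/2) − E_BVP(plus − minus/2)` with
`E_BVP(t,ṫ,x,ẋ) = ½(g₀₀(x)ṫ² − ẋ²)`, the partial derivatives with respect to the
difference variables, evaluated in the physical limit (all difference variables zero),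
equal the corresponding partial derivatives of `E_BVP` at the plus variables; hence the
Euler–Lagrange equations from varying `t₋`, `x₋` in the physical limit are exactly the
geodesic equations for the physical curves. -/
theorem stmt18 (m c : ℝ) (hm : 0 < m) (hc : 0 < c)
    (V : ℝ → ℝ) (hV : ContDiff ℝ 1 V)
    (g : ℝ → ℝ) (hg : g = fun y => c ^ 2 + 2 * V y / m)
    (EBVP : ℝ → ℝ → ℝ → ℝ → ℝ)
    (hEBVP : EBVP = fun t td x xd => (1 / 2) * (g x * td ^ 2 - xd ^ 2))
    (EIVP : ℝ → ℝ → ℝ → ℝ → ℝ → ℝ → ℝ → ℝ → ℝ)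
    (hEIVP : EIVP = fun tp tdp xp xdp tm tdm xm xdm =>
      EBVP (tp + tm / 2) (tdp + tdm / 2) (xp + xm / 2) (xdp + xdm / 2)
        - EBVP (tp - tm / 2) (tdp - tdm / 2) (xp - xm / 2) (xdp - xdm / 2)) :
    (∀ tp tdp xp xdp : ℝ,
      deriv (fun tm => EIVP tp tdp xp xdp tm 0 0 0) 0 = 0 ∧
      deriv (fun tdm => EIVP tp tdp xp xdp 0 tdm 0 0) 0 = g xp * tdp ∧
      deriv (fun xm => EIVP tp tdp xp xdp 0 0 xm 0) 0 = (1 / 2) * deriv g xp * tdp ^ 2 ∧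
      deriv (fun xdm => EIVP tp tdp xp xdp 0 0 0 xdm) 0 = -xdp) ∧
    (∀ tp xp : ℝ → ℝ, ContDiff ℝ 2 tp → ContDiff ℝ 2 xp → ∀ γ : ℝ,
      ((deriv (fun tm => EIVP (tp γ) (deriv tp γ) (xp γ) (deriv xp γ) tm 0 0 0) 0
          - deriv (fun s =>
              deriv (fun tdm => EIVP (tp s) (deriv tp s) (xp s) (deriv xp s) 0 tdm 0 0) 0) γ
            = 0)
        ↔ deriv (fun s => g (xp s) * deriv tp s) γ = 0) ∧
      ((deriv (fun xm => EIVP (tp γ) (deriv tp γ) (xp γ) (deriv xp γ) 0 0 xm 0) 0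
          - deriv (fun s =>
              deriv (fun xdm => EIVP (tp s) (deriv tp s) (xp s) (deriv xp s) 0 0 0 xdm) 0) γ
            = 0)
        ↔ deriv (deriv xp) γ + (1 / 2) * deriv g (xp γ) * (deriv tp γ) ^ 2 = 0)) :=
  stmt18_general m c V hV g hg EBVP hEBVP EIVP hEIVP
end
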